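/- arXiv:2208.13820 — 4 statements merged into one kernel-verified Lean document; each statement's English description precedes it below -/
import Mathlib

section
/- If a self-adjoint operator A on an N-dimensional inner product space has a kernel of dimension at least m, and A is k-nonnegative for some k ≤ m + 1, then A is nonnegative (positive semidefinite). -/
/-- A list of eigenvalues `λ₁ ≤ λ₂ ≤ …` (0-indexed) is `k`-nonnegative if
`λ₁ + … + λ_{⌊k⌋} + (k − ⌊k⌋) λ_{⌊k⌋+1} ≥ 0`. -/
def kNonneg (lam : ℕ → ℝ) (k : ℝ) : Prop :=
  0 ≤ (∑ i ∈ Finset.range ⌊k⌋₊, lam i) + (k - (⌊k⌋₊ : ℝ)) * lam ⌊k⌋₊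

/-- The increasingly sorted eigenvalues of a symmetric real matrix, extended by `0`
beyond index `N`. -/
noncomputable def sortedEigenvalues {N : ℕ} {A : Matrix (Fin N) (Fin N) ℝ}
    (hA : A.IsHermitian) : ℕ → ℝ :=
  fun i => if h : i < N then (hA.eigenvalues ∘ Tuple.sort hA.eigenvalues) ⟨i, h⟩ else 0

/-! If some eigenvalue were negative, then together with the at least `m` zero eigenvalues there
would be `m + 1` nonpositive ones, so the sorted eigenvalues `λ₁, …, λ_{m+1}` are all `≤ 0` and
`λ₁ < 0`. Since `1 ≤ k ≤ m + 1`, the `k`-sum only involves these and contains `λ₁` with full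
weight, hence is at most `λ₁ < 0`. -/

open Finset

theorem kNonneg.zero_le_apply_zero {lam : ℕ → ℝ} {k : ℝ} {m : ℕ} (hnn : kNonneg lam k)
    (hk1 : 1 ≤ k) (hkm : k ≤ m + 1) (hle : ∀ i ≤ m, lam i ≤ 0) : 0 ≤ lam 0 := by
  obtain ⟨n, hn⟩ : ∃ n, ⌊k⌋₊ = n + 1 :=
    Nat.exists_eq_add_one.mpr ((Nat.one_le_floor_iff k).mpr hk1)
  have hnm : n ≤ m := by
    have := Nat.floor_le_of_le (n := m + 1) (by exact_mod_cast hkm)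
    omega
  have hsum : ∑ i ∈ range ⌊k⌋₊, lam i ≤ lam 0 := by
    rw [hn, sum_range_succ']
    have htail : ∑ i ∈ range n, lam (i + 1) ≤ 0 :=
      sum_nonpos fun i hi => hle (i + 1) (by have := mem_range.mp hi; omega)
    linarith
  -- either `λ_{⌊k⌋+1}` is among the nonpositive ones, or `k = m + 1` is an integer
  have hfrac : (k - ⌊k⌋₊) * lam ⌊k⌋₊ ≤ 0 := by
    have hcoef : 0 ≤ k - ⌊k⌋₊ := sub_nonneg.mpr (Nat.floor_le (by linarith))
    rcases Nat.lt_or_ge n m with h | h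
    · exact mul_nonpos_of_nonneg_of_nonpos hcoef (hle _ (by omega))
    · have hfloor : ⌊k⌋₊ = m + 1 := by omega
      have hcoef0 : k - ⌊k⌋₊ = 0 := by
        rw [hfloor] at hcoef ⊢
        push_cast at hcoef ⊢
        linarith
      rw [hcoef0, zero_mul]
  unfold kNonneg at hnn
  linarith

theorem Tuple.apply_sort_le_of_lt_card {α : Type*} [LinearOrder α] {n : ℕ} (f : Fin n → α)
    {a : α} {j : Fin n} (hj : j < #{i | f i ≤ a}) : f (sort f j) ≤ a := by
  have hcard : #{i | (f ∘ sort f) i ≤ a} = #{i | f i ≤ a} :=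
    card_equiv (sort f) fun i => by simp
  exact (lt_card_le_iff_apply_le_of_monotone (monotone_sort f)).mp (hcard ▸ hj)

theorem Matrix.IsHermitian.finrank_ker_mulVecLin_eq_card {𝕜 n : Type*} [RCLike 𝕜] [Fintype n]
    [DecidableEq n] {A : Matrix n n 𝕜} (hA : A.IsHermitian) :
    Module.finrank 𝕜 (LinearMap.ker A.mulVecLin) = #{i | hA.eigenvalues i = 0} := by
  have hrank := A.mulVecLin.finrank_range_add_finrank_ker
  rw [← Matrix.rank, hA.rank_eq_card_non_zero_eigs, Module.finrank_fintype_fun_eq_card,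
    Fintype.card_subtype] at hrank
  simp only [ne_eq] at hrank
  have hsplit := card_filter_add_card_filter_not (s := univ) (hA.eigenvalues · = 0)
  rw [card_univ] at hsplit
  omega

theorem sortedEigenvalues_nonpos_of_lt_card {N : ℕ} {A : Matrix (Fin N) (Fin N) ℝ}
    (hA : A.IsHermitian) {j : ℕ} (hj : j < #{i | hA.eigenvalues i ≤ 0}) :
    sortedEigenvalues hA j ≤ 0 := by
  unfold sortedEigenvalues
  split_ifs
  · exact Tuple.apply_sort_le_of_lt_card _ hj
  · rfl

theorem sortedEigenvalues_zero_le {N : ℕ} {A : Matrix (Fin N) (Fin N) ℝ}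
    (hA : A.IsHermitian) (i : Fin N) : sortedEigenvalues hA 0 ≤ hA.eigenvalues i := by
  rw [sortedEigenvalues, dif_pos i.pos]
  exact Tuple.apply_sort_le_of_lt_card _ (card_pos.mpr ⟨i, by simp⟩)

/-- If a self-adjoint operator `A` on an `N`-dimensional inner product space has a kernel of
dimension at least `m`, and `A` is `k`-nonnegative for some `k ≤ m + 1`, then `A` is
positive semidefinite. -/
theorem posSemidef_of_kernel_of_kNonneg (N : ℕ) (A : Matrix (Fin N) (Fin N) ℝ)
    (hA : A.IsHermitian) (m : ℕ)
    (hker : m ≤ Module.finrank ℝ (LinearMap.ker A.mulVecLin))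
    (k : ℝ) (hk1 : 1 ≤ k) (hkm : k ≤ (m : ℝ) + 1)
    (hnn : kNonneg (sortedEigenvalues hA) k) :
    A.PosSemidef := by
  rw [hA.posSemidef_iff_eigenvalues_nonneg]
  intro i
  by_contra! hi : hA.eigenvalues i < 0
  have hcount : m < #{j | hA.eigenvalues j ≤ 0} := calc
    m ≤ #{j | hA.eigenvalues j = 0} := hA.finrank_ker_mulVecLin_eq_card ▸ hker
    _ < #{j | hA.eigenvalues j ≤ 0} := card_lt_card <| (ssubset_iff_of_subset
      (monotone_filter_right _ fun _ _ => le_of_eq)).mpr ⟨i, by simp [hi.le], by simp [hi.ne]⟩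
  have h0 := hnn.zero_le_apply_zero hk1 hkm fun j hj =>
    sortedEigenvalues_nonpos_of_lt_card hA (hj.trans_lt hcount)
  linarith [sortedEigenvalues_zero_le hA i]
end

section
/- For an algebraic curvature tensor on ℝⁿ = ℝᵖ ⊕ ℝ^{n−p} which is a direct sum of curvature tensors on the factors (i.e., R(x,y,z,w) = 0 whenever the arguments mix the two factors nontrivially, as for a Riemannian product), the curvature operator of the second kind has kernel of dimension at least p(n−p); explicitly, all symmetrized tensors eⁱ⊗eʲ + eʲ⊗eⁱ with eᵢ in the first factor and eⱼ in the second lie in the kernel. -/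
/-- An algebraic curvature tensor on `ℝⁿ`. -/
structure CurvTensor (n : ℕ) where
  R : Fin n → Fin n → Fin n → Fin n → ℝ
  antisymm_fst : ∀ i j k l, R j i k l = - R i j k l
  antisymm_snd : ∀ i j k l, R i j l k = - R i j k l
  pair_symm : ∀ i j k l, R k l i j = R i j k l
  bianchi : ∀ i j k l, R i j k l + R j k i l + R k i j l = 0

/-- The operator `R̄` on `(0,2)`-tensors, `(R̄ h)_{ij} = ∑_{k,l} R_{iklj} h_{kl}`. -/
noncomputable def Rbar {n : ℕ} (T : CurvTensor n) :
    Matrix (Fin n) (Fin n) ℝ →ₗ[ℝ] Matrix (Fin n) (Fin n) ℝ where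
  toFun h := Matrix.of fun i j => ∑ k, ∑ l, T.R i k l j * h k l
  map_add' h₁ h₂ := by
    ext i j
    simp [Matrix.add_apply, mul_add, Finset.sum_add_distrib]
  map_smul' c h := by
    ext i j
    simp [Matrix.smul_apply, Finset.mul_sum, mul_left_comm]

/-- Orthogonal projection of `(0,2)`-tensors onto trace-free symmetric tensors `S²₀`. -/
noncomputable def projS20 (n : ℕ) :
    Matrix (Fin n) (Fin n) ℝ →ₗ[ℝ] Matrix (Fin n) (Fin n) ℝ where
  toFun h := Matrix.of fun i j =>
    (h i j + h j i) / 2 - if i = j then Matrix.trace h / n else 0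
  map_add' a b := by
    ext i j
    by_cases h : i = j <;>
      simp [Matrix.add_apply, Matrix.trace_add, h] <;> ring
  map_smul' c a := by
    ext i j
    by_cases h : i = j <;>
      simp [Matrix.smul_apply, Matrix.trace_smul, smul_eq_mul, h] <;> ring

/-- The curvature operator of the second kind, `𝓡 = pr ∘ R̄ ∘ pr`. -/
noncomputable def calR {n : ℕ} (T : CurvTensor n) :
    Matrix (Fin n) (Fin n) ℝ →ₗ[ℝ] Matrix (Fin n) (Fin n) ℝ :=
  projS20 n ∘ₗ Rbar T ∘ₗ projS20 n

/-- The symmetrized tensor `eⁱ⊗eʲ + eʲ⊗eⁱ`. -/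
noncomputable def Esym {n : ℕ} (i j : Fin n) : Matrix (Fin n) (Fin n) ℝ :=
  Matrix.single i j 1 + Matrix.single j i 1

/-! The tensors `Esym i j` with `i ≠ j` are trace-free and symmetric, so `projS20` fixes them and
the `(a, b)` entry of `calR T (Esym i j)` comes from `R_{aijb} + R_{ajib}`. For `i` in the first
factor and `j` in the second, the first term vanishes by the product structure and the second by
the symmetries of `R`. Since the `Esym i j` with `i < j` are linearly independent, the `p(n - p)`
mixed pairs span a subspace of the kernel of that dimension. -/

open scoped Matrix

theorem projS20_eq_self {n : ℕ} {h : Matrix (Fin n) (Fin n) ℝ} (hsymm : hᵀ = h)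
    (htrace : h.trace = 0) : projS20 n h = h := by
  ext a b
  have hba : h b a = h a b := by rw [← Matrix.transpose_apply h a b, hsymm]
  simp [projS20, hba, htrace]

theorem Esym_transpose {n : ℕ} (i j : Fin n) : (Esym i j)ᵀ = Esym i j := by
  simp [Esym, Matrix.transpose_single, add_comm]

theorem trace_Esym {n : ℕ} {i j : Fin n} (hij : i ≠ j) : (Esym i j).trace = 0 := by
  simp [Esym, Matrix.trace_single_eq_of_ne _ _ _ hij, Matrix.trace_single_eq_of_ne _ _ _ hij.symm]

theorem Esym_apply_of_lt {n : ℕ} {i j k l : Fin n} (hij : i < j) (hkl : k < l) :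
    Esym i j k l = if i = k ∧ j = l then 1 else 0 := by
  have hswap : ¬(j = k ∧ i = l) := by
    rintro ⟨rfl, rfl⟩
    exact lt_asymm hij hkl
  simp [Esym, Matrix.single, hswap]

theorem Rbar_single {n : ℕ} (T : CurvTensor n) (k l a b : Fin n) (c : ℝ) :
    Rbar T (Matrix.single k l c) a b = T.R a k l b * c := by
  simp [Rbar, Matrix.single, ite_and]

theorem Rbar_Esym {n : ℕ} (T : CurvTensor n) (i j a b : Fin n) :
    Rbar T (Esym i j) a b = T.R a i j b + T.R a j i b := by
  simp [Esym, Rbar_single]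

theorem calR_Esym {n : ℕ} (T : CurvTensor n) {i j : Fin n} (hij : i ≠ j) :
    calR T (Esym i j) = projS20 n (Rbar T (Esym i j)) := by
  simp [calR, projS20_eq_self (Esym_transpose i j) (trace_Esym hij)]

theorem linearIndependent_Esym (n : ℕ) :
    LinearIndependent ℝ fun ij : {ij : Fin n × Fin n // ij.1 < ij.2} => Esym ij.1.1 ij.1.2 := by
  rw [Fintype.linearIndependent_iff]
  intro c hc kl
  have hdelta : ∀ ij : {ij : Fin n × Fin n // ij.1 < ij.2},
      Esym ij.1.1 ij.1.2 kl.1.1 kl.1.2 = if ij = kl then 1 else 0 := fun ij => by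
    simp [Esym_apply_of_lt ij.2 kl.2, Subtype.ext_iff, Prod.ext_iff]
  simpa [Matrix.sum_apply, hdelta] using congrFun (congrFun hc kl.1.1) kl.1.2

theorem CurvTensor.R_eq_zero_of_le_of_lt {n p : ℕ} (T : CurvTensor n) {i j k l : Fin n}
    (hprod : ∀ i j k l : Fin n, (j : ℕ) < p → p ≤ (k : ℕ) → T.R i j k l = 0)
    (hj : p ≤ (j : ℕ)) (hk : (k : ℕ) < p) : T.R i j k l = 0 := by
  rw [← neg_eq_zero, ← T.antisymm_snd, ← T.pair_symm, ← neg_eq_zero, ← T.antisymm_snd]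
  exact hprod l k j i hk hj

theorem calR_Esym_eq_zero {n p : ℕ} (T : CurvTensor n)
    (hprod : ∀ i j k l : Fin n, (j : ℕ) < p → p ≤ (k : ℕ) → T.R i j k l = 0)
    {i j : Fin n} (hi : (i : ℕ) < p) (hj : p ≤ (j : ℕ)) :
    calR T (Esym i j) = 0 := by
  have hij : i ≠ j := Fin.ne_of_lt (Fin.lt_def.2 (by omega))
  have hRbar : Rbar T (Esym i j) = 0 := by
    ext a b
    rw [Rbar_Esym, hprod a i j b hi hj,
      T.R_eq_zero_of_le_of_lt hprod hj hi, add_zero, Matrix.zero_apply]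
  rw [calR_Esym T hij, hRbar, map_zero]

def mixedPair {n p : ℕ} (y : Fin p × Fin (n - p)) : {ij : Fin n × Fin n // ij.1 < ij.2} :=
  have := y.2.isLt
  ⟨(⟨y.1, by omega⟩, ⟨p + y.2, by omega⟩), Fin.mk_lt_mk.2 (by omega)⟩

theorem mixedPair_injective (n p : ℕ) : Function.Injective (@mixedPair n p) := by
  rintro ⟨i, j⟩ ⟨i', j'⟩ h
  simp only [mixedPair, Subtype.mk.injEq, Prod.mk.injEq, Fin.mk.injEq,
    Nat.add_left_cancel_iff] at h
  exact Prod.ext (Fin.ext h.1) (Fin.ext h.2)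

theorem calR_product_kernel_general (n p : ℕ) (T : CurvTensor n)
    (hprod : ∀ i j k l : Fin n, (j : ℕ) < p → p ≤ (k : ℕ) → T.R i j k l = 0) :
    (∀ i j : Fin n, (i : ℕ) < p → p ≤ (j : ℕ) → calR T (Esym i j) = 0) ∧
    p * (n - p) ≤ Module.finrank ℝ (LinearMap.ker (calR T)) := by
  have hker : ∀ i j : Fin n, (i : ℕ) < p → p ≤ (j : ℕ) → calR T (Esym i j) = 0 :=
    fun i j hi hj => calR_Esym_eq_zero T hprod hi hj
  refine ⟨hker, ?_⟩
  let g (y : Fin p × Fin (n - p)) := Esym (mixedPair y).1.1 (mixedPair y).1.2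
  have hli : LinearIndependent ℝ g := (linearIndependent_Esym n).comp _ (mixedPair_injective n p)
  have hspan : Submodule.span ℝ (Set.range g) ≤ LinearMap.ker (calR T) := by
    rw [Submodule.span_le]
    rintro _ ⟨y, rfl⟩
    exact hker _ _ (by simp [mixedPair]) (by simp [mixedPair])
  calc p * (n - p) = Fintype.card (Fin p × Fin (n - p)) := by simp
    _ = Module.finrank ℝ (Submodule.span ℝ (Set.range g)) := (finrank_span_eq_card hli).symm
    _ ≤ Module.finrank ℝ (LinearMap.ker (calR T)) := Submodule.finrank_mono hspan

/-- For an algebraic curvature tensor on `ℝⁿ = ℝᵖ ⊕ ℝ^{n-p}` with product structure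
(`R_{ijkl} = 0` whenever the second index lies in the first factor and the third in the
second factor), all symmetrized tensors `eⁱ⊗eʲ + eʲ⊗eⁱ` with `eᵢ` in the first factor and
`eⱼ` in the second lie in the kernel of the curvature operator of the second kind, and the
kernel has dimension at least `p(n-p)`. -/
theorem calR_product_kernel (n p : ℕ) (hp : p ≤ n) (T : CurvTensor n)
    (hprod : ∀ i j k l : Fin n, (j : ℕ) < p → p ≤ (k : ℕ) → T.R i j k l = 0) :
    (∀ i j : Fin n, (i : ℕ) < p → p ≤ (j : ℕ) → calR T (Esym i j) = 0) ∧
    p * (n - p) ≤ Module.finrank ℝ (LinearMap.ker (calR T)) :=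
  calR_product_kernel_general n p T hprod
end

section
/- For the Riemannian product Sᵖ × S^{n−p} of unit round spheres (2 ≤ p ≤ n−2 or p ≥ 1, n−p ≥ 2), the curvature operator of the second kind has eigenvalues 0 (with multiplicity p(n−p)), 1 (with multiplicity p(p+1)/2 + (n−p)(n−p+1)/2 − 2), and 1 − 2p(n−p)/n (with multiplicity 1). -/
/-!
Write `i ~ j` when the coordinates `i` and `j` belong to the same sphere factor. Then
`R_{ijkl} = [i ~ j] (δ_{ik} δ_{jl} - δ_{il} δ_{jk})`, so the contraction is
`R̄(h)_{ij} = [i ~ j] h_{ji} - δ_{ij} ∑_{k ~ i} h_{kk}`, and `Ric` is diagonal with entry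
`#{l | l ~ k} - 1` at `k`. Hence on symmetric tensors with zero diagonal `𝓡` keeps the
same-factor entries and kills the mixed ones, while on a diagonal tensor `d` it acts by
`d_i ↦ d_i - ∑_{k ~ i} d_k + ⟨Ric, d⟩ / n`. Both sums vanish for `E^{ii} - E^{jj}` with `i ~ j`;
for `g₁ / p - g₂ / (n - p)` they equal `±1` and `2p - n`.
-/

/-- The algebraic curvature tensor of the Riemannian product of unit round spheres
`Sᵖ × S^{n-p}`: the constant curvature `1` tensor on each factor. -/
noncomputable def Rprod (n p : ℕ) (i j k l : Fin n) : ℝ :=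
  if ((i : ℕ) < p ∧ (j : ℕ) < p ∧ (k : ℕ) < p ∧ (l : ℕ) < p) ∨
     (p ≤ (i : ℕ) ∧ p ≤ (j : ℕ) ∧ p ≤ (k : ℕ) ∧ p ≤ (l : ℕ)) then
    (if i = k then (1 : ℝ) else 0) * (if j = l then 1 else 0) -
      (if i = l then (1 : ℝ) else 0) * (if j = k then 1 else 0)
  else 0

/-- The Ricci curvature of `Sᵖ × S^{n-p}`. -/
noncomputable def RicProd (n p : ℕ) (a b : Fin n) : ℝ := ∑ i, Rprod n p a i b i

/-- The curvature operator of the second kind of `Sᵖ × S^{n-p}` acting on (trace-free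
symmetric) `(0,2)`-tensors: `𝓡(h) = R̄(h) + ⟨Ric, h⟩ g / n`. -/
noncomputable def calRProd (n p : ℕ) (h : Matrix (Fin n) (Fin n) ℝ) :
    Matrix (Fin n) (Fin n) ℝ :=
  Matrix.of fun i j =>
    (∑ k, ∑ l, Rprod n p i k l j * h k l) +
      (∑ k, ∑ l, RicProd n p k l * h k l) / n * (if i = j then 1 else 0)

/-- The diagonal tensor `eⁱ⊗eⁱ`. -/
noncomputable def Ediag {n : ℕ} (i : Fin n) : Matrix (Fin n) (Fin n) ℝ :=
  Matrix.single i i 1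

open Finset Matrix

abbrev SameFactor (p : ℕ) {n : ℕ} (i j : Fin n) : Prop := (i : ℕ) < p ↔ (j : ℕ) < p

section Coordinates

variable {n : ℕ} (p : ℕ)

lemma Fin.sum_ite_val_lt (hpn : p ≤ n) (α β : ℝ) :
    ∑ k : Fin n, (if (k : ℕ) < p then α else β) = p * α + (n - p) * β := by
  rw [Finset.sum_ite, Finset.sum_const, Finset.sum_const, filter_not,
    card_sdiff_of_subset (filter_subset _ _), Fin.card_filter_val_lt, card_univ,
    Fintype.card_fin, min_eq_right hpn, nsmul_eq_mul, nsmul_eq_mul, Nat.cast_sub hpn]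

lemma sum_filter_sameFactor_ite (hpn : p ≤ n) (a : Fin n) (α β : ℝ) :
    ∑ k with SameFactor p a k, (if (k : ℕ) < p then α else β) =
      if (a : ℕ) < p then p * α else (n - p) * β := by
  have hterm : ∀ k : Fin n, (if SameFactor p a k then (if (k : ℕ) < p then α else β) else 0) =
      if (k : ℕ) < p then (if (a : ℕ) < p then α else 0) else (if (a : ℕ) < p then 0 else β) := by
    intro k
    by_cases ha : (a : ℕ) < p <;> by_cases hk : (k : ℕ) < p <;> simp [SameFactor, ha, hk]
  rw [sum_filter, Finset.sum_congr rfl fun k _ => hterm k, Fin.sum_ite_val_lt p hpn]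
  split_ifs <;> ring

lemma card_filter_sameFactor (hpn : p ≤ n) (a : Fin n) :
    (#{k | SameFactor p a k} : ℝ) = if (a : ℕ) < p then (p : ℝ) else n - p := by
  have h := sum_filter_sameFactor_ite p hpn a 1 1
  simp only [ite_self, mul_one] at h
  rw [cast_card, h]

end Coordinates

section Operator

variable {n p : ℕ}

lemma Rprod_eq_ite (i j k l : Fin n) :
    Rprod n p i j k l = if SameFactor p i j then
      (if i = k ∧ j = l then 1 else 0) - (if i = l ∧ j = k then 1 else 0) else 0 := by
  unfold Rprod
  split_ifs <;> subst_vars <;> simp at * <;> omega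

lemma sum_Rprod_mul (h : Matrix (Fin n) (Fin n) ℝ) (i j : Fin n) :
    ∑ k, ∑ l, Rprod n p i k l j * h k l =
      (if SameFactor p i j then h j i else 0) -
        if i = j then ∑ k with SameFactor p i k, h k k else 0 := by
  have inner : ∀ k, ∑ l, Rprod n p i k l j * h k l =
      if SameFactor p i k then (if k = j then h k i else 0) - (if i = j then h k k else 0)
      else 0 := by
    intro k
    simp only [Rprod_eq_ite, ite_mul, zero_mul, sub_mul, one_mul, ite_and]
    split_ifs <;> simp [Finset.sum_sub_distrib]
  simp only [inner]
  rw [← sum_filter, sum_sub_distrib, sum_ite_eq', sum_ite_irrel, sum_const_zero]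
  simp only [mem_filter, mem_univ, true_and]

lemma RicProd_eq (k l : Fin n) :
    RicProd n p k l = if k = l then (#{i | SameFactor p k i} : ℝ) - 1 else 0 := by
  unfold RicProd
  simp only [Rprod_eq_ite]
  by_cases hkl : k = l
  · subst hkl
    have hk : ∀ i, (k = i ∧ i = k) ↔ k = i := fun i => ⟨And.left, fun h => ⟨h, h.symm⟩⟩
    rw [← sum_filter]
    simp [hk, sum_sub_distrib]
  · refine (sum_eq_zero fun i _ => ?_).trans (if_neg hkl).symm
    have : ¬(k = i ∧ i = l) := fun ⟨hki, hil⟩ => hkl (hki.trans hil)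
    simp [hkl, this]

lemma sum_RicProd_mul (h : Matrix (Fin n) (Fin n) ℝ) :
    ∑ k, ∑ l, RicProd n p k l * h k l = ∑ k, ((#{i | SameFactor p k i} : ℝ) - 1) * h k k := by
  simp [RicProd_eq, ite_mul]

lemma calRProd_apply_of_ne (h : Matrix (Fin n) (Fin n) ℝ) {i j : Fin n} (hij : i ≠ j) :
    calRProd n p h i j = if SameFactor p i j then h j i else 0 := by
  simp [calRProd, sum_Rprod_mul, hij]

lemma calRProd_apply_self (h : Matrix (Fin n) (Fin n) ℝ) (i : Fin n) :
    calRProd n p h i i = h i i - ∑ k with SameFactor p i k, h k k +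
      (∑ k, ((#{l | SameFactor p k l} : ℝ) - 1) * h k k) / n := by
  simp [calRProd, sum_Rprod_mul, sum_RicProd_mul]

lemma calRProd_of_diag_eq_zero {h : Matrix (Fin n) (Fin n) ℝ} (hsymm : hᵀ = h)
    (hdiag : ∀ k, h k k = 0) :
    calRProd n p h = of fun i j => if SameFactor p i j then h i j else 0 := by
  ext i j
  rcases eq_or_ne i j with rfl | hij
  · simp [calRProd_apply_self, hdiag]
  · rw [calRProd_apply_of_ne h hij, of_apply, ← transpose_apply h, hsymm]

lemma calRProd_diagonal (d : Fin n → ℝ) :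
    calRProd n p (diagonal d) = diagonal fun i => d i - ∑ k with SameFactor p i k, d k +
      (∑ k, ((#{l | SameFactor p k l} : ℝ) - 1) * d k) / n := by
  ext i j
  rcases eq_or_ne i j with rfl | hij
  · simp [calRProd_apply_self]
  · simp [calRProd_apply_of_ne _ hij, hij, hij.symm]

lemma Esym_apply (i j a b : Fin n) :
    Esym i j a b = (if i = a ∧ j = b then 1 else 0) + (if j = a ∧ i = b then 1 else 0) := by
  simp [Esym, single]

lemma Esym_apply_self {i j : Fin n} (hij : i ≠ j) (k : Fin n) : Esym i j k k = 0 := by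
  rw [Esym_apply, if_neg, if_neg, add_zero] <;> rintro ⟨rfl, rfl⟩ <;> exact hij rfl

lemma sameFactor_iff_of_Esym_apply_ne_zero {i j a b : Fin n} (hE : Esym i j a b ≠ 0) :
    SameFactor p a b ↔ SameFactor p i j := by
  rw [Esym_apply] at hE
  by_cases h₁ : i = a ∧ j = b
  · obtain ⟨rfl, rfl⟩ := h₁; rfl
  by_cases h₂ : j = a ∧ i = b
  · obtain ⟨rfl, rfl⟩ := h₂; exact Iff.comm
  simp [h₁, h₂] at hE

lemma calRProd_Esym {i j : Fin n} (hij : i ≠ j) :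
    calRProd n p (Esym i j) = if SameFactor p i j then Esym i j else 0 := by
  rw [calRProd_of_diag_eq_zero (by simp [Esym, add_comm]) (Esym_apply_self hij)]
  ext a b
  by_cases hE : Esym i j a b = 0
  · split_ifs <;> simp [hE]
  · simp only [of_apply, sameFactor_iff_of_Esym_apply_ne_zero hE]
    split_ifs <;> rfl

lemma Ediag_sub_Ediag (i j : Fin n) :
    Ediag i - Ediag j = diagonal (Pi.single i 1 - Pi.single j 1) := by
  rw [Ediag, Ediag, ← diagonal_single, ← diagonal_single, diagonal_sub]
  rfl

lemma calRProd_Ediag_sub_Ediag {i j : Fin n} (hij : SameFactor p i j) :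
    calRProd n p (Ediag i - Ediag j) = Ediag i - Ediag j := by
  rw [Ediag_sub_Ediag, calRProd_diagonal]
  congr 1
  funext a
  have hS : ∑ k with SameFactor p a k, (Pi.single i 1 - Pi.single j 1 : Fin n → ℝ) k = 0 := by
    simp [sum_sub_distrib, Pi.single_apply, SameFactor, hij]
  have hT : ∑ k, ((#{l | SameFactor p k l} : ℝ) - 1) *
      (Pi.single i 1 - Pi.single j 1 : Fin n → ℝ) k = 0 := by
    simp only [Pi.sub_apply, mul_sub, sum_sub_distrib, Pi.single_apply, mul_ite, mul_one,
      mul_zero, sum_ite_eq', mem_univ, if_true]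
    rw [filter_congr fun l _ => iff_congr hij Iff.rfl, sub_self]
  rw [hS, hT]; ring

lemma calRProd_diagonal_factor_difference (hp : 0 < p) (hpn : p < n) :
    calRProd n p
        (diagonal fun a : Fin n => if (a : ℕ) < p then (1 : ℝ) / p else -(1 / (n - p))) =
      (1 - 2 * p * ((n : ℝ) - p) / n) •
        diagonal fun a : Fin n => if (a : ℕ) < p then (1 : ℝ) / p else -(1 / (n - p)) := by
  have hp' : (0 : ℝ) < p := by exact_mod_cast hp
  have hnp : (0 : ℝ) < n - p := sub_pos.2 (by exact_mod_cast hpn)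
  have hn : (0 : ℝ) < n := by linarith
  set d : Fin n → ℝ := fun a => if (a : ℕ) < p then 1 / p else -(1 / (n - p))
  have hS : ∀ a, ∑ k with SameFactor p a k, d k = if (a : ℕ) < p then 1 else -1 := by
    intro a
    rw [sum_filter_sameFactor_ite p hpn.le]
    split_ifs <;> field_simp
  have hT : ∑ k, ((#{l | SameFactor p k l} : ℝ) - 1) * d k = 2 * p - n :=
    calc ∑ k, ((#{l | SameFactor p k l} : ℝ) - 1) * d k
        = ∑ k : Fin n, if (k : ℕ) < p then ((p : ℝ) - 1) / p else -((n - p - 1) / (n - p)) :=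
          sum_congr rfl fun k _ => by
            rw [card_filter_sameFactor p hpn.le]; simp only [d]; split_ifs <;> ring
      _ = 2 * p - n := by
          rw [Fin.sum_ite_val_lt p hpn.le]; field_simp; ring
  rw [calRProd_diagonal, ← diagonal_smul]
  congr 1
  funext a
  rw [hS, hT, Pi.smul_apply, smul_eq_mul]
  simp only [d]
  split_ifs <;> field_simp <;> ring

end Operator

/-- The eigenspace decomposition of the curvature operator of the second kind of
`Sᵖ × S^{n-p}`: the mixed tensors `E^{ij}` (`i ≤ p < j`) lie in the kernel; the tensors
`E^{ij}` with `i < j` in the same factor, together with the diagonal differences within each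
factor, are eigenvectors with eigenvalue `1`; and the trace-free multiple of the difference
of the two factor metrics is an eigenvector with eigenvalue `1 - 2p(n-p)/n`. -/
theorem calRProd_eigenvalues (n p : ℕ) (hp1 : 1 ≤ p) (hpn : p < n) :
    (∀ i j : Fin n, (i : ℕ) < p → p ≤ (j : ℕ) → calRProd n p (Esym i j) = 0) ∧
    (∀ i j : Fin n, i ≠ j →
      (((i : ℕ) < p ∧ (j : ℕ) < p) ∨ (p ≤ (i : ℕ) ∧ p ≤ (j : ℕ))) →
      calRProd n p (Esym i j) = Esym i j) ∧
    (∀ i j : Fin n,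
      (((i : ℕ) < p ∧ (j : ℕ) < p) ∨ (p ≤ (i : ℕ) ∧ p ≤ (j : ℕ))) →
      calRProd n p (Ediag i - Ediag j) = Ediag i - Ediag j) ∧
    (calRProd n p
        (Matrix.of fun a b : Fin n => if a = b then
            (if (a : ℕ) < p then (1 : ℝ) / p else 0) -
              (if p ≤ (a : ℕ) then (1 : ℝ) / (n - p) else 0)
          else 0)
      = (1 - 2 * p * ((n : ℝ) - p) / n) •
        Matrix.of fun a b : Fin n => if a = b then
            (if (a : ℕ) < p then (1 : ℝ) / p else 0) -
              (if p ≤ (a : ℕ) then (1 : ℝ) / (n - p) else 0)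
          else 0) := by
  have hsame {i j : Fin n} (h : ((i : ℕ) < p ∧ (j : ℕ) < p) ∨ (p ≤ (i : ℕ) ∧ p ≤ (j : ℕ))) :
      SameFactor p i j := by
    unfold SameFactor; omega
  have hdiff : (Matrix.of fun a b : Fin n => if a = b then
        (if (a : ℕ) < p then (1 : ℝ) / p else 0) - (if p ≤ (a : ℕ) then (1 : ℝ) / (n - p) else 0)
        else 0) =
        diagonal fun a : Fin n => if (a : ℕ) < p then (1 : ℝ) / p else -(1 / (n - p)) := by
    ext a b
    simp only [of_apply, diagonal_apply]
    split_ifs <;> first | omega | ring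
  refine ⟨fun i j hi hj => ?_, fun i j hij h => ?_, fun i j h => ?_, ?_⟩
  · have hij : i ≠ j := fun h => by rw [h] at hi; omega
    rw [calRProd_Esym hij, if_neg (by unfold SameFactor; omega)]
  · rw [calRProd_Esym hij, if_pos (hsame h)]
  · exact calRProd_Ediag_sub_Ediag (hsame h)
  · rw [hdiff]
    exact calRProd_diagonal_factor_difference hp1 hpn
end

section
/- Let λ₁ ≤ … ≤ λ_N be real numbers and suppose there exist nonnegative weights ω_α with max_α ω_α ≤ c and Σ_α ω_α = T such that Σ_α ω_α λ_α ≤ 0 (weights applied to a permutation of the eigenvalues). If λ₁ + … + λ_{⌊k⌋} + (k−⌊k⌋)λ_{⌊k⌋+1} ≥ 0 for some k < T/c, then either λ₁ ≥ 0 (all eigenvalues nonnegative... i.e. the list is 1-nonnegative) or Σ_α ω_α λ_α > 0 for every such weight system. (Weight principle dichotomy.) -/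
open Finset

lemma floor_lt_of_mul_lt_sum {N : ℕ} {w : ℕ → ℝ} {c k : ℝ} (hc : 0 ≤ c)
    (hw : ∀ i < N, w i ≤ c) (hk : 0 ≤ k) (hkw : k * c < ∑ i ∈ range N, w i) :
    ⌊k⌋₊ < N := by
  have hwN : ∑ i ∈ range N, w i ≤ N * c := by
    simpa using sum_le_card_nsmul (range N) w c fun i hi => hw i (mem_range.mp hi)
  exact (Nat.floor_lt hk).mpr (lt_of_mul_lt_mul_right (hkw.trans_le hwN) hc)

lemma kNonneg.floor_pos {lam : ℕ → ℝ} {k : ℝ} (hnn : kNonneg lam k) (hk : 1 ≤ k)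
    (hmono : MonotoneOn lam (Set.Iic ⌊k⌋₊)) (h0 : lam 0 < 0) : 0 < lam ⌊k⌋₊ := by
  by_contra! hm
  have hm1 : 0 < ⌊k⌋₊ := Nat.floor_pos.mpr hk
  have hsum : ∑ i ∈ range ⌊k⌋₊, lam i < 0 := by
    refine (sum_lt_sum (g := fun _ => 0) (fun i hi => ?_) ⟨0, mem_range.mpr hm1, h0⟩).trans_eq
      sum_const_zero
    have hi : i ≤ ⌊k⌋₊ := (mem_range.mp hi).le
    exact (hmono hi Set.self_mem_Iic hi).trans hm
  have htail : (k - ⌊k⌋₊) * lam ⌊k⌋₊ ≤ 0 :=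
    mul_nonpos_of_nonneg_of_nonpos (sub_nonneg.mpr (Nat.floor_le (by linarith))) hm
  unfold kNonneg at hnn
  linarith

lemma sum_sub_mul_le_sum_mul {N m : ℕ} {lam w : ℕ → ℝ} {c : ℝ}
    (hmono : MonotoneOn lam (Set.Iio N)) (hw : ∀ i < N, 0 ≤ w i ∧ w i ≤ c) (hmN : m < N) :
    c * ∑ i ∈ range m, (lam i - lam m) + (∑ i ∈ range N, w i) * lam m ≤
      ∑ i ∈ range N, w i * lam i := by
  have hhead : c * ∑ i ∈ range m, (lam i - lam m) ≤ ∑ i ∈ range m, w i * (lam i - lam m) := by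
    rw [mul_sum]
    refine sum_le_sum fun i hi => ?_
    have hi : i < m := mem_range.mp hi
    exact mul_le_mul_of_nonpos_right (hw i (hi.trans hmN)).2
      (sub_nonpos.mpr (hmono (hi.trans hmN) hmN hi.le))
  have htail : 0 ≤ ∑ i ∈ Ico m N, w i * (lam i - lam m) := by
    refine sum_nonneg fun i hi => ?_
    obtain ⟨hmi, hiN⟩ := mem_Ico.mp hi
    exact mul_nonneg (hw i hiN).1 (sub_nonneg.mpr (hmono hmN hiN hmi))
  have hsplit : ∑ i ∈ range N, w i * lam i =
      ∑ i ∈ range N, w i * (lam i - lam m) + (∑ i ∈ range N, w i) * lam m := by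
    rw [sum_mul, ← sum_add_distrib]
    exact sum_congr rfl fun i _ => by ring
  rw [hsplit, ← sum_range_add_sum_Ico (fun i => w i * (lam i - lam m)) hmN.le]
  linarith

/-- The weight principle dichotomy: let `λ₁ ≤ … ≤ λ_N` be the (ordered) eigenvalues and
suppose the list is `k`-nonnegative for some `k < T/c`.  Then either all eigenvalues are
nonnegative (the list is `1`-nonnegative), or every weighted sum `∑ ω_α λ_α` with weights
`0 ≤ ω_α ≤ c` of total weight `∑ ω_α = T` is positive. -/
theorem weight_principle (N : ℕ) (lam : ℕ → ℝ)
    (hsort : ∀ i j : ℕ, i ≤ j → j < N → lam i ≤ lam j)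
    (c T : ℝ) (hc : 0 < c) (k : ℝ) (hk1 : 1 ≤ k) (hkT : k < T / c)
    (hnn : kNonneg lam k) :
    (∀ i < N, 0 ≤ lam i) ∨
      (∀ w : ℕ → ℝ, (∀ i < N, 0 ≤ w i ∧ w i ≤ c) →
        (∑ i ∈ Finset.range N, w i) = T →
        0 < ∑ i ∈ Finset.range N, w i * lam i) := by
  refine or_iff_not_imp_left.mpr fun hneg w hw hT => ?_
  obtain ⟨i₀, hi₀N, hi₀⟩ : ∃ i < N, lam i < 0 := by simpa using hneg
  have hmono : MonotoneOn lam (Set.Iio N) := fun i _ j hj hij => hsort i j hij hj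
  have hkcT : k * c < T := (lt_div_iff₀ hc).mp hkT
  have hmN : ⌊k⌋₊ < N :=
    floor_lt_of_mul_lt_sum hc.le (fun i hi => (hw i hi).2) (by linarith) (hT ▸ hkcT)
  have hlam₀ : lam 0 < 0 := (hsort 0 i₀ i₀.zero_le hi₀N).trans_lt hi₀
  have hlam_m : 0 < lam ⌊k⌋₊ :=
    hnn.floor_pos hk1 (hmono.mono (Set.Iic_subset_Iio.mpr hmN)) hlam₀
  calc 0 < c * ((∑ i ∈ range ⌊k⌋₊, lam i) + (k - ⌊k⌋₊) * lam ⌊k⌋₊) + (T - k * c) * lam ⌊k⌋₊ :=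
        add_pos_of_nonneg_of_pos (mul_nonneg hc.le hnn) (mul_pos (by linarith) hlam_m)
    _ = c * ∑ i ∈ range ⌊k⌋₊, (lam i - lam ⌊k⌋₊) + T * lam ⌊k⌋₊ := by
        rw [sum_sub_distrib, sum_const, card_range, nsmul_eq_mul]
        ring
    _ ≤ ∑ i ∈ range N, w i * lam i := hT ▸ sum_sub_mul_le_sum_mul hmono hw hmN
end
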